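/- Let C be a q-ary linear code of dimension k with generator matrix G = (I_k | R), and suppose C' is a code of dimension k+1 and length n + r with systematic generator matrix G' whose first k rows are (I_k | 0⋯0 | R) and whose last row begins with k zeros followed by r ones. Then the multiset of points M' associated to G' satisfies: M'(⟨e_{k+1}⟩) = r, and for every point ⟨u⟩ of PG(k−1,q) (as well as u = 0), the number of columns of G whose span is ⟨u⟩ (with the convention c(0) = r) equals Σ_{α ∈ F_q} M'(⟨(u | α)⟩). -/

import Mathlib

open Classical

open Matrix

/-- The embedding of the column indices of `G = (I_k | R)` (of size `n`) into the column
indices of the extended matrix `G' = (I_k 0 R // 0 1⋯1 ⋆)` (of size `n + r`): the first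
`k` columns (the identity part) keep their index, while the remaining columns are shifted
past the `r` new middle columns. -/
def colEmb (n r k : ℕ) (j : Fin n) : Fin (n + r) :=
  if j.1 < k then ⟨j.1, Nat.lt_of_lt_of_le j.isLt (Nat.le_add_right n r)⟩
  else ⟨j.1 + r, Nat.add_lt_add_right j.isLt r⟩

lemma colEmb_val (n r k : ℕ) (j : Fin n) :
    (colEmb n r k j).1 = if j.1 < k then j.1 else j.1 + r := by
  unfold colEmb; split <;> rfl

lemma colEmb_inj (n r k : ℕ) (hk : k ≤ n) : Function.Injective (colEmb n r k) := by
  intro a b hab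
  have := congrArg Fin.val hab
  rw [colEmb_val, colEmb_val] at this
  apply Fin.ext
  split at this <;> split at this <;> omega

lemma colEmb_classify (n r k : ℕ) (hk : k ≤ n) (j' : Fin (n + r)) :
    (k ≤ j'.1 ∧ j'.1 < k + r) ∨ ∃ j : Fin n, colEmb n r k j = j' := by
  by_cases h1 : j'.1 < k
  · right
    refine ⟨⟨j'.1, lt_of_lt_of_le h1 hk⟩, ?_⟩
    apply Fin.ext; rw [colEmb_val]; simp [h1]
  · by_cases h2 : j'.1 < k + r
    · left; exact ⟨le_of_not_gt h1, h2⟩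
    · right
      refine ⟨⟨j'.1 - r, by omega⟩, ?_⟩
      apply Fin.ext; rw [colEmb_val]
      have : ¬ (j'.1 - r < k) := by omega
      simp only [this, if_false]; omega

/-- Column-counting constraint for the extension step (equation (3) of Lemma 7): if `G` is
a systematic generator matrix `(I_k | R)` with nonzero columns and `G'` is a systematic
generator matrix of shape `(I_k 0 R // 0 1⋯1 ⋆)` whose first `k` rows coincide with `G`
(with `r` zero columns inserted) and whose last row starts with `k` zeros followed by `r`
ones, then the multiset of points `M'` of `G'` satisfies `M'(⟨e_{k+1}⟩) = r`, and for
every point `⟨u⟩` of `PG(k-1,q)` the number `c(⟨u⟩)` of columns of `G` spanning `⟨u⟩`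
equals `∑_{α ∈ F_q} M'(⟨(u | α)⟩)`. -/
theorem extension_column_counts {F : Type} [Field F] [Fintype F]
    {k n r : ℕ} (hk : k ≤ n) (hr : 1 ≤ r)
    (G : Matrix (Fin k) (Fin n) F) (G' : Matrix (Fin (k + 1)) (Fin (n + r)) F)
    (hGsys : ∀ (i : Fin k) (j : Fin n), j.1 < k → G i j = if i.1 = j.1 then 1 else 0)
    (hGnz : ∀ j : Fin n, (fun i => G i j) ≠ 0)
    (htop : ∀ (i : Fin k) (j : Fin n), G' i.castSucc (colEmb n r k j) = G i j)
    (hmid : ∀ (i : Fin k) (m : Fin r),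
      G' i.castSucc ⟨k + m.1, Nat.add_lt_add_of_le_of_lt hk m.isLt⟩ = 0)
    (hlast0 : ∀ j : Fin (n + r), j.1 < k → G' (Fin.last k) j = 0)
    (hlast1 : ∀ j : Fin (n + r), k ≤ j.1 → j.1 < k + r → G' (Fin.last k) j = 1) :
    ({j : Fin (n + r) | Submodule.span F {fun i => G' i j} =
        Submodule.span F {(Pi.single (Fin.last k) 1 : Fin (k + 1) → F)}} :
      Finset (Fin (n + r))).card = r ∧
    ∀ u : Fin k → F, u ≠ 0 →
      ({j : Fin n | Submodule.span F {fun i => G i j} = Submodule.span F {u}} :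
        Finset (Fin n)).card =
      ∑ α : F, ({j : Fin (n + r) | Submodule.span F {fun i => G' i j} =
          Submodule.span F {Fin.snoc u α}} : Finset (Fin (n + r))).card := by
  -- middle columns are `e = Pi.single (last k) 1`
  have hmidcol : ∀ j' : Fin (n + r), k ≤ j'.1 → j'.1 < k + r →
      (fun i => G' i j') = (Pi.single (Fin.last k) 1 : Fin (k + 1) → F) := by
    intro j' h1 h2
    funext i
    refine Fin.lastCases ?_ ?_ i
    · rw [hlast1 j' h1 h2, Pi.single_eq_same]
    · intro i'
      have hj' : (⟨k + (j'.1 - k), Nat.add_lt_add_of_le_of_lt hk (show j'.1 - k < r by omega)⟩ :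
          Fin (n + r)) = j' := by apply Fin.ext; simp; omega
      rw [← hj', hmid i' ⟨j'.1 - k, by omega⟩,
        Pi.single_eq_of_ne (Fin.castSucc_lt_last i').ne]
  -- embedded columns are snoc of a column of G
  have hsnoccol : ∀ j : Fin n, (fun i => G' i (colEmb n r k j)) =
      Fin.snoc (fun i => G i j) (G' (Fin.last k) (colEmb n r k j)) := by
    intro j
    funext i
    refine Fin.lastCases ?_ ?_ i
    · rw [Fin.snoc_last]
    · intro i'; rw [Fin.snoc_castSucc, htop]
  constructor
  · -- Part 1
    have hset : ({j : Fin (n + r) | Submodule.span F {fun i => G' i j} =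
        Submodule.span F {(Pi.single (Fin.last k) 1 : Fin (k + 1) → F)}} :
        Finset (Fin (n + r))) =
        Finset.image (fun m : Fin r =>
          (⟨k + m.1, Nat.add_lt_add_of_le_of_lt hk m.isLt⟩ : Fin (n + r))) Finset.univ := by
      ext j'
      simp only [Finset.mem_filter, Finset.mem_image, Finset.mem_univ, true_and]
      constructor
      · intro hspan
        rcases colEmb_classify n r k hk j' with ⟨h1, h2⟩ | ⟨j, rfl⟩
        · exact ⟨⟨j'.1 - k, by omega⟩, by apply Fin.ext; simp; omega⟩
        · exfalso
          rw [Submodule.span_singleton_eq_span_singleton] at hspan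
          obtain ⟨z, hz⟩ := hspan
          apply hGnz j
          funext i
          have := congrFun hz i.castSucc
          rw [hsnoccol j] at this
          simp only [Pi.smul_apply, Fin.snoc_castSucc,
            Pi.single_eq_of_ne (Fin.castSucc_lt_last i).ne, Units.smul_def,
            smul_eq_mul] at this
          have hzne : (z : F) ≠ 0 := z.ne_zero
          exact (mul_eq_zero.mp this).resolve_left hzne
      · rintro ⟨m, rfl⟩
        exact congrArg (Submodule.span F) (congrArg _ (hmidcol _ (by simp) (by simp [m.isLt])))
    rw [hset, Finset.card_image_of_injective _ (fun a b hab => by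
      apply Fin.ext; have := congrArg Fin.val hab; simpa using this), Finset.card_univ,
      Fintype.card_fin]
  · -- Part 2
    intro u hu
    obtain ⟨i₀, hi₀⟩ : ∃ i, u i ≠ 0 := by
      by_contra h; push_neg at h; exact hu (funext h)
    set S' : F → Finset (Fin (n + r)) := fun α =>
      ({j : Fin (n + r) | Submodule.span F {fun i => G' i j} =
          Submodule.span F {Fin.snoc u α}} : Finset (Fin (n + r))) with hS'
    have hdisj : ∀ α ∈ (Finset.univ : Finset F), ∀ β ∈ (Finset.univ : Finset F),
        α ≠ β → Disjoint (S' α) (S' β) := by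
      intro α _ β _ hαβ
      rw [Finset.disjoint_left]
      intro j' hα hβ
      simp only [hS', Finset.mem_filter, Finset.mem_univ, true_and] at hα hβ
      have : Submodule.span F {(Fin.snoc u α : Fin (k + 1) → F)} =
          Submodule.span F {(Fin.snoc u β : Fin (k + 1) → F)} := hα.symm.trans hβ
      rw [Submodule.span_singleton_eq_span_singleton] at this
      obtain ⟨z, hz⟩ := this
      have h1 : (z : F) * u i₀ = u i₀ := by
        have := congrFun hz i₀.castSucc
        simpa [Units.smul_def] using this
      have hz1 : (z : F) = 1 :=
        mul_right_cancel₀ hi₀ (h1.trans (one_mul _).symm)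
      have h2 : (z : F) * α = β := by
        have := congrFun hz (Fin.last k)
        simpa [Units.smul_def] using this
      rw [hz1, one_mul] at h2
      exact hαβ h2
    have hbiUnion : Finset.univ.biUnion S' =
        Finset.image (colEmb n r k)
          ({j : Fin n | Submodule.span F {fun i => G i j} = Submodule.span F {u}} :
            Finset (Fin n)) := by
      ext j'
      simp only [Finset.mem_biUnion, Finset.mem_univ, true_and, Finset.mem_image,
        hS', Finset.mem_filter]
      constructor
      · rintro ⟨α, hα⟩
        rw [Submodule.span_singleton_eq_span_singleton] at hα
        obtain ⟨z, hz⟩ := hα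
        rcases colEmb_classify n r k hk j' with ⟨h1, h2⟩ | ⟨j, rfl⟩
        · exfalso
          rw [hmidcol j' h1 h2] at hz
          have := congrFun hz i₀.castSucc
          simp only [Pi.smul_apply, Units.smul_def, smul_eq_mul,
            Pi.single_eq_of_ne (Fin.castSucc_lt_last i₀).ne, mul_zero,
            Fin.snoc_castSucc] at this
          exact hi₀ this.symm
        · refine ⟨j, ?_, rfl⟩
          rw [Submodule.span_singleton_eq_span_singleton]
          refine ⟨z, funext fun i => ?_⟩
          have := congrFun hz i.castSucc
          rw [hsnoccol j] at this
          simpa using this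
      · rintro ⟨j, hj, rfl⟩
        rw [Submodule.span_singleton_eq_span_singleton] at hj
        obtain ⟨z, hz⟩ := hj
        set β := G' (Fin.last k) (colEmb n r k j) with hβ
        refine ⟨(z : F) * β, ?_⟩
        rw [Submodule.span_singleton_eq_span_singleton]
        refine ⟨z, funext fun i => ?_⟩
        rw [hsnoccol j]
        refine Fin.lastCases ?_ ?_ i
        · simp [Units.smul_def, hβ]
        · intro i'
          have := congrFun hz i'
          simpa [Units.smul_def] using this
    calc ({j : Fin n | Submodule.span F {fun i => G i j} = Submodule.span F {u}} :
            Finset (Fin n)).card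
        = (Finset.image (colEmb n r k)
            ({j : Fin n | Submodule.span F {fun i => G i j} = Submodule.span F {u}} :
              Finset (Fin n))).card :=
          (Finset.card_image_of_injective _ (colEmb_inj n r k hk)).symm
      _ = (Finset.univ.biUnion S').card := by rw [hbiUnion]
      _ = ∑ α : F, (S' α).card := Finset.card_biUnion hdisj
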